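/- arXiv:1710.02663 — 6 statements merged into one kernel-verified Lean document; each statement's English description precedes it below -/
import Mathlib

section
/- Let Ω ⊂ ℝ^d be a bounded domain and let V = H¹₀(Ω) × H¹₀(Ω) with norm ‖(u,φ)‖_V² = ‖∇u‖²_{L²} + ‖∇φ‖²_{L²}. Define a((u,φ),(v,ψ)) = ∫_Ω ∇φ·∇ψ dx, and let 𝒱 = {(v,ψ) ∈ V : ∫_Ω ∇v·∇μ dx + ∫_Ω ψ μ dx = 0 for all μ ∈ H¹₀(Ω)}. Then there exists α > 0 such that a((v,ψ),(v,ψ)) ≥ α ‖(v,ψ)‖_V² for all (v,ψ) ∈ 𝒱. -/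
/- Model: `V` is `H¹₀(Ω)` with the Dirichlet inner product (`‖v‖ = ‖∇v‖_{L²}`), `E` is
`L²(Ω)`, and `ι : V →L[ℝ] E` is the (Poincaré-continuous) inclusion.  The space
`V × V` carries the norm `‖(u,φ)‖_V² = ‖∇u‖² + ‖∇φ‖² = ‖u‖² + ‖φ‖²`.  The bilinear
form is `a((u,φ),(v,ψ)) = ∫ ∇φ·∇ψ = ⟪φ, ψ⟫`, and the kernel 𝒱 consists of pairs with
`∫ ∇v·∇μ + ∫ ψ μ = 0` for all `μ ∈ H¹₀(Ω)`, i.e. `⟪v, μ⟫ + ⟪ι ψ, ι μ⟫ = 0`.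
The conclusion is coercivity of `a` on 𝒱. -/
open scoped RealInnerProductSpace

theorem stmt_1
    {V E : Type*} [NormedAddCommGroup V] [InnerProductSpace ℝ V] [CompleteSpace V]
    [NormedAddCommGroup E] [InnerProductSpace ℝ E] [CompleteSpace E]
    (ι : V →L[ℝ] E) :
    ∃ α > (0 : ℝ), ∀ v ψ : V,
      (∀ μ : V, ⟪v, μ⟫ + ⟪ι ψ, ι μ⟫ = 0) →
      ⟪ψ, ψ⟫ ≥ α * (‖v‖ ^ 2 + ‖ψ‖ ^ 2) := by
  set C := ‖ι‖ with hC
  have hC0 : 0 ≤ C := norm_nonneg ι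
  refine ⟨1 / (C ^ 4 + 1), by positivity, fun v ψ h => ?_⟩
  have h1 : ⟪v, v⟫ = -⟪ι ψ, ι v⟫ := by linarith [h v]
  have h2 : ‖v‖ ^ 2 ≤ C ^ 2 * ‖ψ‖ * ‖v‖ := by
    have habs : |⟪ι ψ, ι v⟫| ≤ ‖ι ψ‖ * ‖ι v‖ := abs_real_inner_le_norm _ _
    have hψ : ‖ι ψ‖ ≤ C * ‖ψ‖ := ι.le_opNorm ψ
    have hv : ‖ι v‖ ≤ C * ‖v‖ := ι.le_opNorm v
    have h3 : ‖v‖ ^ 2 = -⟪ι ψ, ι v⟫ := by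
      rw [← h1, real_inner_self_eq_norm_sq]
    have h4 : -⟪ι ψ, ι v⟫ ≤ ‖ι ψ‖ * ‖ι v‖ := le_trans (neg_le_abs _) habs
    nlinarith [norm_nonneg (ι ψ), norm_nonneg (ι v), norm_nonneg ψ, norm_nonneg v]
  have key : ‖v‖ ^ 2 ≤ C ^ 4 * ‖ψ‖ ^ 2 := by
    nlinarith [norm_nonneg v, norm_nonneg ψ, sq_nonneg (C ^ 2 * ‖ψ‖ - ‖v‖)]
  have hψψ : ⟪ψ, ψ⟫ = ‖ψ‖ ^ 2 := real_inner_self_eq_norm_sq ψ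
  rw [hψψ, ge_iff_le, div_mul_eq_mul_div, div_le_iff₀ (by positivity)]
  nlinarith [sq_nonneg ‖ψ‖]
end

section
/- Let Ω ⊂ ℝ^d be a bounded domain, V = H¹₀(Ω) × H¹₀(Ω) with norm ‖(v,ψ)‖_V = (‖∇v‖²_{L²} + ‖∇ψ‖²_{L²})^{1/2}, and M = H¹₀(Ω) with its H¹ norm. Define b((v,ψ),μ) = ∫_Ω ψ μ dx + ∫_Ω ∇v·∇μ dx. Then there exists β > 0 such that for every μ ∈ M, sup over nonzero (v,ψ) ∈ V of b((v,ψ),μ)/‖(v,ψ)‖_V ≥ β ‖μ‖_{H¹(Ω)}. -/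
/- Model: `V` is `H¹₀(Ω)` with the Dirichlet inner product (`‖v‖ = ‖∇v‖_{L²}`), `E` is
`L²(Ω)`, `ι : V →L[ℝ] E` the inclusion.  `M = H¹₀(Ω)` with its `H¹` norm
`‖μ‖_{H¹} = (‖μ‖_{L²}² + ‖∇μ‖_{L²}²)^{1/2} = (‖ι μ‖² + ‖μ‖²)^{1/2}`.
`b((v,ψ),μ) = ∫ ψ μ + ∫ ∇v·∇μ = ⟪ι ψ, ι μ⟫ + ⟪v, μ⟫`, and
`‖(v,ψ)‖_V = (‖v‖² + ‖ψ‖²)^{1/2}`.  The inf–sup condition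
`sup_{(v,ψ)≠0} b((v,ψ),μ)/‖(v,ψ)‖_V ≥ β ‖μ‖_{H¹}` is expressed by exhibiting, for each
`μ`, a pair in the unit ball of `V × V` realizing the bound. -/
open scoped RealInnerProductSpace

theorem stmt_2
    {V E : Type*} [NormedAddCommGroup V] [InnerProductSpace ℝ V] [CompleteSpace V]
    [NormedAddCommGroup E] [InnerProductSpace ℝ E] [CompleteSpace E]
    (ι : V →L[ℝ] E) :
    ∃ β > (0 : ℝ), ∀ μ : V, ∃ v ψ : V,
      Real.sqrt (‖v‖ ^ 2 + ‖ψ‖ ^ 2) ≤ 1 ∧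
      ⟪ι ψ, ι μ⟫ + ⟪v, μ⟫ ≥ β * Real.sqrt (‖ι μ‖ ^ 2 + ‖μ‖ ^ 2) := by
  refine ⟨(Real.sqrt (‖ι‖ ^ 2 + 1))⁻¹, by
    positivity, fun μ => ?_⟩
  by_cases hμ : μ = 0
  · refine ⟨0, 0, by simp, ?_⟩
    simp [hμ]
  · have hμn : (0:ℝ) < ‖μ‖ := norm_pos_iff.mpr hμ
    refine ⟨‖μ‖⁻¹ • μ, 0, ?_, ?_⟩
    · simp [norm_smul, abs_of_pos (inv_pos.mpr hμn), inv_mul_cancel₀ hμn.ne']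
    · have h1 : ⟪ι (0:V), ι μ⟫ + ⟪‖μ‖⁻¹ • μ, μ⟫ = ‖μ‖ := by
        simp [real_inner_smul_left, real_inner_self_eq_norm_sq,
          inv_mul_eq_div, pow_two]
      rw [h1]
      have h2 : Real.sqrt (‖ι μ‖ ^ 2 + ‖μ‖ ^ 2) ≤ Real.sqrt (‖ι‖ ^ 2 + 1) * ‖μ‖ := by
        have key : ‖ι μ‖ ^ 2 + ‖μ‖ ^ 2 ≤ (‖ι‖ ^ 2 + 1) * ‖μ‖ ^ 2 := by
          have := ι.le_opNorm μ
          nlinarith [norm_nonneg (ι μ), norm_nonneg μ, norm_nonneg ι]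
        calc Real.sqrt (‖ι μ‖ ^ 2 + ‖μ‖ ^ 2) ≤ Real.sqrt ((‖ι‖ ^ 2 + 1) * ‖μ‖ ^ 2) :=
              Real.sqrt_le_sqrt key
          _ = Real.sqrt (‖ι‖ ^ 2 + 1) * ‖μ‖ := by
              rw [Real.sqrt_mul (by positivity), Real.sqrt_sq hμn.le]
      have hs : (0:ℝ) < Real.sqrt (‖ι‖ ^ 2 + 1) := by positivity
      rw [ge_iff_le, inv_mul_le_iff₀ hs]
      linarith
end

section
/- Let Ω ⊂ ℝ^d be a bounded domain, f ∈ H^{-1}(Ω), V = H¹₀(Ω) × H¹₀(Ω), and M = H¹₀(Ω). With a((u,φ),(v,ψ)) = ∫_Ω ∇φ·∇ψ, b((v,ψ),μ) = ∫_Ω ψμ + ∫_Ω ∇v·∇μ, and ℓ(v) = ⟨f,v⟩, there exists a unique ((u,φ),λ) ∈ V × M satisfying a((u,φ),(v,ψ)) + b((v,ψ),λ) = ℓ(v) for all (v,ψ) ∈ V and b((u,φ),μ) = 0 for all μ ∈ M. -/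
/- Model: `V` is `H¹₀(Ω)` with the Dirichlet inner product (`‖v‖ = ‖∇v‖_{L²}`), `E` is
`L²(Ω)`, `ι : V →L[ℝ] E` the (Poincaré-continuous) inclusion, and `f ∈ H^{-1}(Ω)` is a
continuous linear functional on `V`.  With
`a((u,φ),(v,ψ)) = ∫ ∇φ·∇ψ = ⟪φ,ψ⟫`,
`b((v,ψ),μ) = ∫ ψ μ + ∫ ∇v·∇μ = ⟪ι ψ, ι μ⟫ + ⟪v, μ⟫`, and `ℓ(v) = ⟨f,v⟩`,
the saddle-point problem has a unique solution `((u,φ),λ) ∈ (V × V) × M` with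
`M = H¹₀(Ω) = V`. -/
open scoped RealInnerProductSpace

theorem stmt_4
    {V E : Type*} [NormedAddCommGroup V] [InnerProductSpace ℝ V] [CompleteSpace V]
    [NormedAddCommGroup E] [InnerProductSpace ℝ E] [CompleteSpace E]
    (ι : V →L[ℝ] E) (f : V →L[ℝ] ℝ) :
    ∃! s : (V × V) × V,
      (∀ v ψ : V, ⟪s.1.2, ψ⟫ + (⟪ι ψ, ι s.2⟫ + ⟪v, s.2⟫) = f v) ∧
      (∀ μ : V, ⟪ι s.1.2, ι μ⟫ + ⟪s.1.1, μ⟫ = 0) := by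
  classical
  set A : V →L[ℝ] V := (ContinuousLinearMap.adjoint ι).comp ι with hA
  have hAinner : ∀ a b : V, ⟪ι a, ι b⟫ = ⟪A a, b⟫ := by
    intro a b
    rw [hA, ContinuousLinearMap.comp_apply, ContinuousLinearMap.adjoint_inner_left]
  have hAinner' : ∀ a b : V, ⟪ι a, ι b⟫ = ⟪a, A b⟫ := by
    intro a b
    rw [hA, ContinuousLinearMap.comp_apply, ContinuousLinearMap.adjoint_inner_right]
  set y : V := (InnerProductSpace.toDual ℝ V).symm f with hy
  have hyv : ∀ v : V, ⟪y, v⟫ = f v := by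
    intro v
    rw [hy]
    exact InnerProductSpace.toDual_symm_apply (𝕜 := ℝ) (E := V)
  refine ⟨((A (A y), -(A y)), y), ⟨?_, ?_⟩, ?_⟩
  · intro v ψ
    simp only
    rw [hAinner' ψ y, inner_neg_left]
    have hc := real_inner_comm ψ (A y)
    have hc' := real_inner_comm (A y) ψ
    have h3 := hyv v
    have h4 := real_inner_comm v y
    linarith
  · intro μ
    simp only
    rw [hAinner (-(A y)) μ, map_neg, inner_neg_left]
    ring
  · rintro ⟨⟨u, φ⟩, lam⟩ ⟨h1, h2⟩
    simp only at h1 h2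
    have hlam : lam = y := by
      apply ext_inner_left ℝ
      intro v
      have := h1 v 0
      simp at this
      rw [this, ← hyv v]
      exact real_inner_comm v y
    subst hlam
    have hφ : φ = -(A y) := by
      have key : ∀ ψ : V, ⟪φ + A y, ψ⟫ = 0 := by
        intro ψ
        have := h1 0 ψ
        rw [hAinner' ψ y] at this
        simp at this
        rw [inner_add_left]
        linarith [real_inner_comm (A y) ψ, real_inner_comm ψ (A y)]
      have h0 := inner_self_eq_zero (𝕜 := ℝ).mp (key (φ + A y))
      rw [add_eq_zero_iff_eq_neg] at h0
      exact h0
    subst hφ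
    have hu : u = A (A y) := by
      have key : ∀ μ : V, ⟪u - A (A y), μ⟫ = 0 := by
        intro μ
        have := h2 μ
        rw [hAinner (-(A y)) μ, map_neg, inner_neg_left] at this
        rw [inner_sub_left]
        linarith
      have h0 := inner_self_eq_zero (𝕜 := ℝ).mp (key (u - A (A y)))
      rwa [sub_eq_zero] at h0
    subst hu
    rfl
end

section
/- Let Ω ⊂ ℝ^d be a bounded domain and let S_h ⊂ H¹₀(Ω) be a finite-dimensional subspace. Let (w,ξ) ∈ H¹₀(Ω)×H¹₀(Ω) satisfy ∫_Ω ∇w·∇q + ξq dx = 0 for all q ∈ H¹₀(Ω), and let (w_h,ξ_h) ∈ S_h×S_h satisfy ∫_Ω ∇w_h·∇q_h + ξ_h q_h dx = 0 for all q_h ∈ S_h. Let R_h w ∈ S_h be the Ritz projection of w. Then ‖∇(w − w_h)‖_{L²(Ω)} ≤ C ‖ξ − ξ_h‖_{L²(Ω)} + ‖∇(w − R_h w)‖_{L²(Ω)}, where C depends only on the Poincaré constant of Ω. -/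
/-! `V` models `H¹₀(Ω)` with the Dirichlet inner product `⟪u, v⟫ = ∫ ∇u·∇v` and `ι` the embedding
into `L²(Ω)`, so `hCP` is the Poincaré inequality.
With `q_h = R_h w - w_h ∈ S_h`, the Ritz property turns `⟪q_h, q_h⟫` into `⟪w - w_h, q_h⟫`,
and subtracting the discrete equation from the continuous one makes this `-⟪ξ - ξ_h, q_h⟫_{L²}`.
Cauchy–Schwarz and Poincaré then give `‖q_h‖ ≤ C_P ‖ξ - ξ_h‖_{L²}`, and the triangle inequality
`‖w - w_h‖ ≤ ‖q_h‖ + ‖w - R_h w‖` finishes the proof. -/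

open scoped RealInnerProductSpace

section

variable {V E : Type*}

theorem mul_norm_apply_nonneg_of_norm_apply_le [NormedAddCommGroup V] [SeminormedAddCommGroup E]
    {F : Type*} [FunLike F V E] [ZeroHomClass F V E] {f : F} {C : ℝ}
    (hf : ∀ v, ‖f v‖ ≤ C * ‖v‖) (v : V) : 0 ≤ C * ‖f v‖ := by
  rcases eq_or_ne v 0 with rfl | hv
  · simp
  · have hC : 0 ≤ C := nonneg_of_mul_nonneg_left ((norm_nonneg _).trans (hf v)) (norm_pos_iff.mpr hv)
    positivity

variable [NormedAddCommGroup V] [InnerProductSpace ℝ V]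
  [NormedAddCommGroup E] [InnerProductSpace ℝ E]

theorem norm_le_mul_norm_of_inner_self_add_inner_eq_zero {ι : V →L[ℝ] E} {C : ℝ}
    (hι : ∀ v, ‖ι v‖ ≤ C * ‖v‖) {x e : V} (hx : ⟪x, x⟫ + ⟪ι e, ι x⟫ = 0) :
    ‖x‖ ≤ C * ‖ι e‖ := by
  have hsq : ‖x‖ * ‖x‖ ≤ C * ‖ι e‖ * ‖x‖ :=
    calc ‖x‖ * ‖x‖ = -⟪ι e, ι x⟫ := by rw [← real_inner_self_eq_norm_mul_norm]; linarith
      _ ≤ ‖ι e‖ * ‖ι x‖ := (neg_le_abs _).trans (abs_real_inner_le_norm _ _)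
      _ ≤ ‖ι e‖ * (C * ‖x‖) := by gcongr; exact hι x
      _ = C * ‖ι e‖ * ‖x‖ := by ring
  nlinarith [mul_norm_apply_nonneg_of_norm_apply_le hι e, norm_nonneg x]

end

theorem stmt_6_general
    {V E : Type*} [NormedAddCommGroup V] [InnerProductSpace ℝ V]
    [NormedAddCommGroup E] [InnerProductSpace ℝ E]
    (ι : V →L[ℝ] E) (CP : ℝ) (hCP : ∀ v : V, ‖ι v‖ ≤ CP * ‖v‖)
    (Sh : Submodule ℝ V)
    (w ξ wh ξh Rw : V)
    (hw : ∀ q : V, ⟪w, q⟫ + ⟪ι ξ, ι q⟫ = 0)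
    (hwh : wh ∈ Sh)
    (hdisc : ∀ qh ∈ Sh, ⟪wh, qh⟫ + ⟪ι ξh, ι qh⟫ = 0)
    (hRw : Rw ∈ Sh) (hRitz : ∀ vh ∈ Sh, ⟪Rw - w, vh⟫ = 0) :
    ‖w - wh‖ ≤ CP * ‖ι ξ - ι ξh‖ + ‖w - Rw‖ := by
  have hqh : Rw - wh ∈ Sh := Sh.sub_mem hRw hwh
  have herr : ⟪Rw - wh, Rw - wh⟫ + ⟪ι (ξ - ξh), ι (Rw - wh)⟫ = 0 := by
    have hritz := hRitz _ hqh
    rw [inner_sub_left] at hritz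
    rw [map_sub, inner_sub_left, inner_sub_left]
    linarith [hw (Rw - wh), hdisc _ hqh]
  have hstab := norm_le_mul_norm_of_inner_self_add_inner_eq_zero hCP herr
  rw [map_sub] at hstab
  calc ‖w - wh‖ = ‖(Rw - wh) + (w - Rw)‖ := by congr 1; abel
    _ ≤ ‖Rw - wh‖ + ‖w - Rw‖ := norm_add_le _ _
    _ ≤ CP * ‖ι ξ - ι ξh‖ + ‖w - Rw‖ := by gcongr

theorem stmt_6
    {V E : Type*} [NormedAddCommGroup V] [InnerProductSpace ℝ V] [CompleteSpace V]
    [NormedAddCommGroup E] [InnerProductSpace ℝ E] [CompleteSpace E]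
    (ι : V →L[ℝ] E) (CP : ℝ) (hCP : ∀ v : V, ‖ι v‖ ≤ CP * ‖v‖)
    (Sh : Submodule ℝ V) [FiniteDimensional ℝ Sh]
    (w ξ wh ξh Rw : V)
    (hw : ∀ q : V, ⟪w, q⟫ + ⟪ι ξ, ι q⟫ = 0)
    (hwh : wh ∈ Sh) (hξh : ξh ∈ Sh)
    (hdisc : ∀ qh ∈ Sh, ⟪wh, qh⟫ + ⟪ι ξh, ι qh⟫ = 0)
    (hRw : Rw ∈ Sh) (hRitz : ∀ vh ∈ Sh, ⟪Rw - w, vh⟫ = 0) :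
    ‖w - wh‖ ≤ CP * ‖ι ξ - ι ξh‖ + ‖w - Rw‖ :=
  stmt_6_general ι CP hCP Sh w ξ wh ξh Rw hw hwh hdisc hRw hRitz
end

section
/- Let Ω ⊂ ℝ^d be a bounded domain, S_h ⊂ H¹₀(Ω) finite-dimensional, and Π_h : L²(Ω) → S_h the L²-orthogonal projection. Given (u,φ) ∈ H¹₀(Ω)×H¹₀(Ω) with ∫_Ω ∇u·∇q + φq dx = 0 for all q ∈ H¹₀(Ω), define ξ_h = Π_h φ and let w_h ∈ S_h solve ∫_Ω ∇w_h·∇q_h + ξ_h q_h dx = 0 for all q_h ∈ S_h. Then (w_h, ξ_h) lies in the discrete kernel {(v_h,ψ_h) ∈ S_h×S_h : ∫_Ω ∇v_h·∇μ_h + ψ_h μ_h dx = 0 for all μ_h ∈ S_h}, and ‖∇(u − w_h)‖_{L²} ≤ C‖φ − Π_h φ‖_{L²} + ‖∇(u − R_h u)‖_{L²}, where R_h is the Ritz projection onto S_h and C depends only on the Poincaré constant of Ω. -/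
/- Model: `V` is `H¹₀(Ω)` with the Dirichlet inner product (`‖v‖ = ‖∇v‖_{L²}`), `E` is
`L²(Ω)`, `ι : V →L[ℝ] E` the inclusion with Poincaré constant `CP`.  `S_h ⊆ V` is a
finite-dimensional subspace.  Given `(u,φ)` with `∫ ∇u·∇q + φ q = 0` for all
`q ∈ H¹₀(Ω)`, let `ξ_h = Π_h φ ∈ S_h` be the `L²`-orthogonal projection of `φ` onto
`S_h` (characterized by `∫ (φ − ξ_h) μ_h = 0` for all `μ_h ∈ S_h`) and `w_h ∈ S_h` solve
`∫ ∇w_h·∇q_h + ξ_h q_h = 0` for all `q_h ∈ S_h`.  Then `(w_h, ξ_h)` is in the discrete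
kernel, and `‖∇(u − w_h)‖ ≤ CP ‖φ − Π_h φ‖_{L²} + ‖∇(u − R_h u)‖`, where `R_h u` is the
Ritz projection of `u` onto `S_h`. -/
open scoped RealInnerProductSpace

theorem stmt_7
    {V E : Type*} [NormedAddCommGroup V] [InnerProductSpace ℝ V] [CompleteSpace V]
    [NormedAddCommGroup E] [InnerProductSpace ℝ E] [CompleteSpace E]
    (ι : V →L[ℝ] E) (CP : ℝ) (hCP : ∀ v : V, ‖ι v‖ ≤ CP * ‖v‖)
    (Sh : Submodule ℝ V) [FiniteDimensional ℝ Sh]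
    (u φ ξh wh Ru : V)
    (hu : ∀ q : V, ⟪u, q⟫ + ⟪ι φ, ι q⟫ = 0)
    (hξh : ξh ∈ Sh) (hproj : ∀ μh ∈ Sh, ⟪ι φ - ι ξh, ι μh⟫ = 0)
    (hwh : wh ∈ Sh) (hwheq : ∀ qh ∈ Sh, ⟪wh, qh⟫ + ⟪ι ξh, ι qh⟫ = 0)
    (hRu : Ru ∈ Sh) (hRitz : ∀ vh ∈ Sh, ⟪u - Ru, vh⟫ = 0) :
    (∀ μh ∈ Sh, ⟪wh, μh⟫ + ⟪ι ξh, ι μh⟫ = 0) ∧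
    ‖u - wh‖ ≤ CP * ‖ι φ - ι ξh‖ + ‖u - Ru‖ := by
  refine ⟨hwheq, ?_⟩
  set g := Ru - wh with hgdef
  have hgSh : g ∈ Sh := Sh.sub_mem hRu hwh
  have e1 : ⟪u, g⟫ = -⟪ι φ, ι g⟫ := by have := hu g; linarith
  have e2 : ⟪wh, g⟫ = -⟪ι ξh, ι g⟫ := by have := hwheq g hgSh; linarith
  have e3 : ⟪u - Ru, g⟫ = 0 := hRitz g hgSh
  have e4 : ⟪g, g⟫ = ⟪ι ξh - ι φ, ι g⟫ := by
    have : ⟪g, g⟫ = ⟪u, g⟫ - ⟪wh, g⟫ := by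
      have e3' : ⟪u, g⟫ - ⟪Ru, g⟫ = 0 := by rw [← inner_sub_left]; exact e3
      rw [hgdef, inner_sub_left]; linarith
    rw [this, e1, e2, inner_sub_left]; ring
  have hnn : 0 ≤ CP * ‖ι φ - ι ξh‖ := by
    rcases (norm_nonneg (ι φ - ι ξh)).eq_or_lt with h | h
    · rw [← h]; ring_nf; exact le_refl 0
    · have h1 : ι φ - ι ξh = ι (φ - ξh) := (map_sub ι φ ξh).symm
      have h2 := hCP (φ - ξh)
      rw [← h1] at h2
      have hφ : 0 < ‖φ - ξh‖ := by
        rcases (norm_nonneg (φ - ξh)).eq_or_lt with h' | h'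
        · exfalso
          have hz : φ - ξh = 0 := norm_eq_zero.mp h'.symm
          rw [h1, hz, map_zero, norm_zero] at h
          exact lt_irrefl 0 h
        · exact h'
      have hCPpos : 0 < CP := by nlinarith
      positivity
  have hg : ‖g‖ ≤ CP * ‖ι φ - ι ξh‖ := by
    rcases (norm_nonneg g).eq_or_lt with h | h
    · rw [← h]; exact hnn
    · have h5 : ⟪g, g⟫ ≤ ‖ι ξh - ι φ‖ * ‖ι g‖ := e4 ▸ real_inner_le_norm _ _
      have h6 : ‖ι g‖ ≤ CP * ‖g‖ := hCP g
      have h7 : ‖ι ξh - ι φ‖ = ‖ι φ - ι ξh‖ := norm_sub_rev _ _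
      have h8 : ⟪g, g⟫ = ‖g‖ * ‖g‖ := real_inner_self_eq_norm_mul_norm g
      have h9 : ‖g‖ * ‖g‖ ≤ (CP * ‖ι φ - ι ξh‖) * ‖g‖ := by
        rw [← h8]
        calc ⟪g, g⟫ ≤ ‖ι φ - ι ξh‖ * ‖ι g‖ := by rw [← h7]; exact h5
          _ ≤ ‖ι φ - ι ξh‖ * (CP * ‖g‖) := by
              exact mul_le_mul_of_nonneg_left h6 (norm_nonneg _)
          _ = (CP * ‖ι φ - ι ξh‖) * ‖g‖ := by ring
      exact le_of_mul_le_mul_right h9 h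
  calc ‖u - wh‖ = ‖(u - Ru) + g‖ := by rw [hgdef, sub_add_sub_cancel]
    _ ≤ ‖u - Ru‖ + ‖g‖ := norm_add_le _ _
    _ ≤ ‖u - Ru‖ + CP * ‖ι φ - ι ξh‖ := by linarith
    _ = CP * ‖ι φ - ι ξh‖ + ‖u - Ru‖ := by ring
end

section
/- Let Ω ⊂ ℝ^d be a bounded domain, S_h ⊂ H¹₀(Ω) finite-dimensional, and Δ_h the discrete Laplacian on S_h defined by ∫_Ω (Δ_h u) v_h dx = −∫_Ω ∇u·∇v_h dx for v_h ∈ S_h. Then there is a constant C > 0 depending only on the Poincaré constant of Ω such that for all u_h ∈ S_h and φ_h ∈ S_h: ‖∇u_h‖²_{L²} ≤ C (‖φ_h − Δ_h u_h‖²_{L²} + ‖∇φ_h‖²_{L²}). -/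
/- Model: `V` is `H¹₀(Ω)` with the Dirichlet inner product (`‖v‖ = ‖∇v‖_{L²}`), `E` is
`L²(Ω)`, `ι : V →L[ℝ] E` the inclusion with Poincaré inequality `‖ι v‖ ≤ CP ‖v‖`.
`S_h ⊆ V` is finite-dimensional; the discrete Laplacian `Δ_h u_h = d ∈ S_h` satisfies
`∫ d v_h = −∫ ∇u_h·∇v_h` for all `v_h ∈ S_h`.  Conclusion (coercivity estimate for the
stabilised form): there is `C > 0` depending only on the Poincaré constant such that
`‖∇u_h‖² ≤ C (‖φ_h − Δ_h u_h‖²_{L²} + ‖∇φ_h‖²_{L²})` for all `u_h, φ_h ∈ S_h`. -/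
open scoped RealInnerProductSpace

theorem stmt_10
    {V E : Type*} [NormedAddCommGroup V] [InnerProductSpace ℝ V] [CompleteSpace V]
    [NormedAddCommGroup E] [InnerProductSpace ℝ E] [CompleteSpace E]
    (ι : V →L[ℝ] E) (CP : ℝ) (hCP : 0 < CP) (hP : ∀ v : V, ‖ι v‖ ≤ CP * ‖v‖)
    (Sh : Submodule ℝ V) [FiniteDimensional ℝ Sh] :
    ∃ C > (0 : ℝ), ∀ uh ∈ Sh, ∀ φh ∈ Sh, ∀ d ∈ Sh,
      (∀ vh ∈ Sh, ⟪ι d, ι vh⟫ = -⟪uh, vh⟫) →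
      ‖uh‖ ^ 2 ≤ C * (‖ι φh - ι d‖ ^ 2 + ‖φh‖ ^ 2) := by
  refine ⟨2 * CP ^ 2 * (1 + CP ^ 2), by positivity, ?_⟩
  intro uh hu φh hφ d hd hlap
  set a := ‖ι φh - ι d‖ with ha
  set b := ‖φh‖ with hb
  have ha0 : 0 ≤ a := norm_nonneg _
  have hb0 : 0 ≤ b := norm_nonneg _
  have key : ‖uh‖ ^ 2 ≤ CP * (a + CP * b) * ‖uh‖ := by
    have h1 : ⟪uh, uh⟫ = -⟪ι d, ι uh⟫ := by rw [hlap uh hu]; ring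
    have h2 : -⟪ι d, ι uh⟫ = ⟪ι φh - ι d, ι uh⟫ - ⟪ι φh, ι uh⟫ := by
      rw [inner_sub_left]; ring
    have h3 : ⟪ι φh - ι d, ι uh⟫ ≤ a * ‖ι uh‖ := real_inner_le_norm _ _
    have h4 : -⟪ι φh, ι uh⟫ ≤ ‖ι φh‖ * ‖ι uh‖ := by
      have := abs_real_inner_le_norm (ι φh) (ι uh)
      nlinarith [neg_abs_le (⟪ι φh, ι uh⟫ : ℝ)]
    have h5 : ‖ι uh‖ ≤ CP * ‖uh‖ := hP uh
    have h6 : ‖ι φh‖ ≤ CP * b := hP φh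
    have hsum : ⟪uh, uh⟫ ≤ (a + CP * b) * ‖ι uh‖ := by
      rw [h1, h2]
      nlinarith [norm_nonneg (ι uh)]
    have hinner : ⟪uh, uh⟫ = ‖uh‖ ^ 2 := real_inner_self_eq_norm_sq uh
    have h7 := mul_le_mul_of_nonneg_left h5 (show (0:ℝ) ≤ a + CP * b by positivity)
    nlinarith
  rcases eq_or_lt_of_le (norm_nonneg uh) with h | h
  · rw [← h]; norm_num; positivity
  · have h7 : ‖uh‖ ≤ CP * (a + CP * b) := by
      nlinarith
    nlinarith [sq_nonneg (a - CP * b), sq_nonneg (CP * a), sq_nonneg (CP * b), norm_nonneg uh]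
end
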